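/- arXiv:0711.3262 — 5 statements merged into one kernel-verified Lean document; each statement's English description precedes it below -/
import Mathlib

section
/- The Mehler kernel formula in one dimension: for t > 0 and x, y ∈ ℝ, the function p_t(x,y) = (2π sinh(2t))^{−1/2} exp(−(1/2) coth(2t)(x² + y²) + (cosech(2t)) x y) satisfies the bound: there exist constants c' > 0 and 0 < c < 1 such that |p_t(x,y)| ≤ c' t^{−1/2} e^{−c|x−y|²/t} for all 0 < t < 1. -/
open Real Set

lemma sinh_convex : ConvexOn ℝ (Set.Icc (0:ℝ) 2) Real.sinh := by
  apply convexOn_of_deriv2_nonneg (convex_Icc 0 2)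
    Real.continuous_sinh.continuousOn
    Real.differentiable_sinh.differentiableOn
  · rw [Real.deriv_sinh]; exact Real.differentiable_cosh.differentiableOn
  · intro x hx
    rw [interior_Icc, mem_Ioo] at hx
    simp [Function.iterate_succ, Real.deriv_sinh, Real.deriv_cosh]
    exact hx.1.le

lemma sinh_le' (t : ℝ) (ht : 0 ≤ t) (ht1 : t ≤ 1) : Real.sinh (2 * t) ≤ t * Real.sinh 2 := by
  have h := sinh_convex.2 (show (0:ℝ) ∈ Icc (0:ℝ) 2 by simp)
    (show (2:ℝ) ∈ Icc (0:ℝ) 2 by simp [mem_Icc])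
    (show (0:ℝ) ≤ 1 - t by linarith) ht (by ring)
  simpa [Real.sinh_zero, mul_comm] using h

/-- short-time Gaussian upper bound for the 1D Mehler (Hermite heat) kernel. -/
theorem stmt_3 :
    ∃ c' > (0:ℝ), ∃ c : ℝ, 0 < c ∧ c < 1 ∧ ∀ t : ℝ, 0 < t → t < 1 → ∀ x y : ℝ,
      |(2 * Real.pi * Real.sinh (2 * t)) ^ (-(1:ℝ)/2) *
        Real.exp (-(1/2) * (Real.cosh (2*t) / Real.sinh (2*t)) * (x^2 + y^2)
          + (1 / Real.sinh (2*t)) * (x * y))|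
        ≤ c' * t ^ (-(1:ℝ)/2) * Real.exp (-c * |x - y|^2 / t) := by
  have hS : (2:ℝ) < Real.sinh 2 := Real.self_lt_sinh_iff.mpr two_pos
  have hSpos : (0:ℝ) < Real.sinh 2 := by linarith
  refine ⟨(4 * Real.pi) ^ (-(1:ℝ)/2), by positivity, 1 / (2 * Real.sinh 2), by positivity,
    ?_, ?_⟩
  · rw [div_lt_one (by linarith)]; linarith
  intro t ht ht1 x y
  have hs : 0 < Real.sinh (2 * t) := Real.sinh_pos_iff.mpr (by linarith)
  have hApos : (0:ℝ) < (2 * Real.pi * Real.sinh (2 * t)) ^ (-(1:ℝ)/2) :=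
    Real.rpow_pos_of_pos (by positivity) _
  rw [abs_of_pos (by positivity)]
  have hA : (2 * Real.pi * Real.sinh (2 * t)) ^ (-(1:ℝ)/2)
      ≤ (4 * Real.pi) ^ (-(1:ℝ)/2) * t ^ (-(1:ℝ)/2) := by
    rw [← Real.mul_rpow (by positivity) ht.le]
    apply Real.rpow_le_rpow_of_nonpos (by positivity) _ (by norm_num)
    have h2t : 2 * t ≤ Real.sinh (2 * t) := (Real.self_lt_sinh_iff.mpr (by linarith)).le
    nlinarith [Real.pi_pos]
  have hE : Real.exp (-(1/2) * (Real.cosh (2*t) / Real.sinh (2*t)) * (x^2 + y^2)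
        + (1 / Real.sinh (2*t)) * (x * y))
      ≤ Real.exp (-(1 / (2 * Real.sinh 2)) * |x - y|^2 / t) := by
    rw [Real.exp_le_exp]
    have step1 : -(1/2) * (Real.cosh (2*t) / Real.sinh (2*t)) * (x^2 + y^2)
        + (1 / Real.sinh (2*t)) * (x * y) ≤ -((x-y)^2) / (2 * Real.sinh (2*t)) := by
      have hc := Real.one_le_cosh (2*t)
      have expand : -(1/2) * (Real.cosh (2*t) / Real.sinh (2*t)) * (x^2 + y^2)
          + (1 / Real.sinh (2*t)) * (x * y)
          = (-(1/2) * Real.cosh (2*t) * (x^2+y^2) + x*y) * (Real.sinh (2*t))⁻¹ := by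
        field_simp
      have expand2 : -((x-y)^2) / (2 * Real.sinh (2*t))
          = (-((x-y)^2)/2) * (Real.sinh (2*t))⁻¹ := by
        field_simp
      rw [expand, expand2]
      apply mul_le_mul_of_nonneg_right _ (inv_nonneg.mpr hs.le)
      nlinarith [mul_nonneg (sub_nonneg.2 hc) (by positivity : (0:ℝ) ≤ x^2 + y^2)]
    have step2 : -((x-y)^2) / (2 * Real.sinh (2*t))
        ≤ -(1 / (2 * Real.sinh 2)) * |x - y|^2 / t := by
      have hle : Real.sinh (2 * t) ≤ t * Real.sinh 2 := sinh_le' t ht.le ht1.le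
      rw [sq_abs]
      have h1 : (x-y)^2 / (2 * (t * Real.sinh 2)) ≤ (x-y)^2 / (2 * Real.sinh (2*t)) :=
        div_le_div_of_nonneg_left (sq_nonneg _) (by positivity) (by linarith)
      have h2 : -(1 / (2 * Real.sinh 2)) * (x - y)^2 / t
          = -((x-y)^2 / (2 * (t * Real.sinh 2))) := by
        field_simp
      rw [h2, neg_div]
      linarith
    linarith
  calc (2 * Real.pi * Real.sinh (2 * t)) ^ (-(1:ℝ)/2) * Real.exp _
      ≤ ((4 * Real.pi) ^ (-(1:ℝ)/2) * t ^ (-(1:ℝ)/2)) * Real.exp (-(1 / (2 * Real.sinh 2)) * |x - y|^2 / t) :=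
        mul_le_mul hA hE (Real.exp_pos _).le (by positivity)
    _ = _ := by ring
end

section
/- For t ≥ 1 and x, y ∈ ℝ, the Mehler kernel p_t(x,y) = (2π sinh(2t))^{−1/2} exp(−(1/2) coth(2t)(x² + y²) + (cosech(2t)) x y) satisfies |p_t(x,y)| ≤ c' e^{−t} e^{−c|x−y|²} for some constants c' > 0 and 0 < c < 1 independent of x, y, t. -/
/-- long-time bound for the 1D Mehler (Hermite heat) kernel. -/
theorem stmt_4 :
    ∃ c' > (0:ℝ), ∃ c : ℝ, 0 < c ∧ c < 1 ∧ ∀ t : ℝ, 1 ≤ t → ∀ x y : ℝ,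
      |(2 * Real.pi * Real.sinh (2 * t)) ^ (-(1:ℝ)/2) *
        Real.exp (-(1/2) * (Real.cosh (2*t) / Real.sinh (2*t)) * (x^2 + y^2)
          + (1 / Real.sinh (2*t)) * (x * y))|
        ≤ c' * Real.exp (-t) * Real.exp (-c * |x - y|^2) := by
  refine ⟨1, one_pos, 1/4, by norm_num, by norm_num, fun t ht x y => ?_⟩
  have hS : 0 < Real.sinh (2*t) := Real.sinh_pos_iff.mpr (by linarith)
  have hC1 : (1:ℝ) ≤ Real.cosh (2*t) := Real.one_le_cosh _
  have hSC : Real.sinh (2*t) ≤ Real.cosh (2*t) := by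
    have := Real.cosh_sub_sinh (2*t)
    nlinarith [Real.exp_pos (-(2*t))]
  rw [abs_of_pos (by positivity)]
  have hA : (2 * Real.pi * Real.sinh (2*t)) ^ (-(1:ℝ)/2) ≤ Real.exp (-t) := by
    have h1 : Real.exp (2*t) ≤ 2 * Real.pi * Real.sinh (2*t) := by
      rw [Real.sinh_eq]
      have hpi := Real.pi_gt_three
      have hE : (3:ℝ) ≤ Real.exp (2*t) := by
        have h2 : (3:ℝ) ≤ Real.exp 2 := by
          have := Real.add_one_le_exp (2:ℝ); linarith
        have h3 : Real.exp 2 ≤ Real.exp (2*t) := Real.exp_le_exp.mpr (by linarith)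
        linarith
      have hinv : Real.exp (-(2*t)) * Real.exp (2*t) = 1 := by
        rw [← Real.exp_add]; simp
      have he : Real.exp (-(2*t)) * 9 ≤ Real.exp (2*t) := by
        nlinarith [Real.exp_pos (-(2*t))]
      nlinarith [Real.exp_pos (-(2*t))]
    calc (2 * Real.pi * Real.sinh (2*t)) ^ (-(1:ℝ)/2)
        ≤ (Real.exp (2*t)) ^ (-(1:ℝ)/2) :=
          Real.rpow_le_rpow_of_nonpos (Real.exp_pos _) h1 (by norm_num)
      _ = Real.exp (-t) := by
          rw [← Real.exp_mul]; ring_nf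
  have hB : Real.exp (-(1/2) * (Real.cosh (2*t) / Real.sinh (2*t)) * (x^2 + y^2)
          + (1 / Real.sinh (2*t)) * (x * y)) ≤ Real.exp (-(1/4) * |x - y|^2) := by
    rw [Real.exp_le_exp, sq_abs]
    have heq : -(1/2) * (Real.cosh (2*t) / Real.sinh (2*t)) * (x^2 + y^2)
          + (1 / Real.sinh (2*t)) * (x * y)
        = (-(1/2) * Real.cosh (2*t) * (x^2+y^2) + x*y) / Real.sinh (2*t) := by
      field_simp
    rw [heq, div_le_iff₀ hS]
    nlinarith [sq_nonneg (x+y), sq_nonneg (x-y),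
      mul_nonneg (sub_nonneg.mpr hSC) (sq_nonneg (x-y)),
      mul_nonneg (sub_nonneg.mpr hC1) (sq_nonneg (x+y))]
  calc (2 * Real.pi * Real.sinh (2 * t)) ^ (-(1:ℝ)/2) *
        Real.exp (-(1/2) * (Real.cosh (2*t) / Real.sinh (2*t)) * (x^2 + y^2)
          + (1 / Real.sinh (2*t)) * (x * y))
      ≤ Real.exp (-t) * Real.exp (-(1/4) * |x-y|^2) := by
        exact mul_le_mul hA hB (Real.exp_pos _).le (Real.exp_pos _).le
    _ = 1 * Real.exp (-t) * Real.exp (-(1/4) * |x-y|^2) := by ring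
end

section
/- Suppose V ∈ L¹(ℝ) with ∫ (1+|t|)|V(t)| dt < ∞, and suppose m : ℝ → ℂ is a bounded continuous function on [x₀, ∞) satisfying the integral equation m(x) = 1 + ∫ₓ^∞ h(t−x, k) V(t) m(t) dt where |h(u,k)| ≤ u for u ≥ 0. Then sup_{x ≥ x₀} |m(x)| ≤ exp(∫_{x₀}^∞ (t − x₀)|V(t)| dt) holds, i.e., |m(x)| ≤ exp(∫ₓ^∞ (t−x)|V(t)| dt) for all x ≥ x₀. In particular, |m(x) − 1| ≤ C(1 + max(0, −x)) for a constant C depending on ∫(1+|t|)|V(t)|dt. -/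
/-!
Write `J x = ∫_{t > x} (t - x) |V t| dt`. Although `V` is merely integrable, `J` is `C¹` with
`J' x = -∫_{t > x} |V t| dt`: its difference quotients are squeezed between values of this
continuous tail integral. Comparing derivatives then gives, for `G ≥ 0` monotone and `F' = G`,
`∫_{t > x} (t - x) |V t| G (J t) dt ≤ F (J x) - F 0`. Since `‖h (t - x)‖ ≤ t - x`, a bound
`‖m‖ ≤ G ∘ J` on `[x₀, ∞)` thus improves to `‖m‖ ≤ 1 + F ∘ J - F 0`. Starting from `‖m‖ ≤ M` and
iterating with `G y = exp y + M yⁿ / n!` yields `‖m‖ ≤ exp J + M Jⁿ / n!` for every `n`; let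
`n → ∞`. The bound on `m - 1` follows from `J x ≤ (1 + max 0 (-x)) ∫ (1 + |t|) |V t| dt`.
-/

open MeasureTheory Set Filter Topology

theorem hasDerivAt_of_sub_mem_Icc {f g : ℝ → ℝ} {x : ℝ} (hg : ContinuousAt g x)
    (hfg : ∀ a b, a ≤ b → f b - f a ∈ Icc ((b - a) * g a) ((b - a) * g b)) :
    HasDerivAt f (g x) x := by
  have hslope : ∀ y ≠ x, slope f x y ∈ Icc (min (g x) (g y)) (max (g x) (g y)) := by
    intro y hy
    rcases hy.lt_or_gt with hyx | hxy
    · obtain ⟨h₁, h₂⟩ := hfg y x hyx.le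
      rw [slope_comm, slope_def_field]
      have hpos : 0 < x - y := sub_pos.2 hyx
      constructor
      · rw [le_div_iff₀ hpos]; nlinarith [min_le_right (g x) (g y)]
      · rw [div_le_iff₀ hpos]; nlinarith [le_max_left (g x) (g y)]
    · obtain ⟨h₁, h₂⟩ := hfg x y hxy.le
      rw [slope_def_field]
      have hpos : 0 < y - x := sub_pos.2 hxy
      constructor
      · rw [le_div_iff₀ hpos]; nlinarith [min_le_left (g x) (g y)]
      · rw [div_le_iff₀ hpos]; nlinarith [le_max_right (g x) (g y)]
  have hmin : Tendsto (fun y => min (g x) (g y)) (𝓝[≠] x) (𝓝 (g x)) := by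
    simpa using ((tendsto_const_nhds (x := g x)).min hg.tendsto).mono_left nhdsWithin_le_nhds
  have hmax : Tendsto (fun y => max (g x) (g y)) (𝓝[≠] x) (𝓝 (g x)) := by
    simpa using ((tendsto_const_nhds (x := g x)).max hg.tendsto).mono_left nhdsWithin_le_nhds
  rw [hasDerivAt_iff_tendsto_slope]
  exact tendsto_of_tendsto_of_tendsto_of_le_of_le' hmin hmax
    (eventually_nhdsWithin_of_forall fun y hy => (hslope y hy).1)
    (eventually_nhdsWithin_of_forall fun y hy => (hslope y hy).2)

theorem hasDerivAt_pow_succ_div_factorial (n : ℕ) (y : ℝ) :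
    HasDerivAt (fun y : ℝ => y ^ (n + 1) / (n + 1).factorial) (y ^ n / n.factorial) y := by
  refine ((hasDerivAt_pow (n + 1) y).div_const _).congr_deriv ?_
  rw [Nat.factorial_succ]
  push_cast
  field_simp

structure TailWeight (ψ : ℝ → ℝ) : Prop where
  nonneg : ∀ t, 0 ≤ ψ t
  integrableOn : ∀ a, IntegrableOn ψ (Ioi a)
  integrableOn_mul : ∀ a, IntegrableOn (fun t => t * ψ t) (Ioi a)

noncomputable def tailIntegral (ψ : ℝ → ℝ) (a : ℝ) : ℝ := ∫ t in Ioi a, ψ t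

noncomputable def tailMoment (ψ : ℝ → ℝ) (a : ℝ) : ℝ := ∫ t in Ioi a, (t - a) * ψ t

theorem tailMoment_mul_const (ψ : ℝ → ℝ) (c a : ℝ) :
    tailMoment (fun t => ψ t * c) a = tailMoment ψ a * c := by
  simp only [tailMoment, ← mul_assoc, integral_mul_const]

namespace TailWeight

variable {ψ : ℝ → ℝ}

theorem of_integrable (hψ₀ : ∀ t, 0 ≤ ψ t) (hψ : Integrable fun t => (1 + |t|) * ψ t) :
    TailWeight ψ := by
  have hpos : ∀ t : ℝ, 0 < 1 + |t| := fun t => by positivity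
  have hdiv : ∀ {u : ℝ → ℝ}, Continuous u → (∀ t, |u t| ≤ 1 + |t|) →
      Integrable fun t => u t * ψ t := by
    intro u hu hu_le
    refine (hψ.bdd_mul (c := 1) (hu.div (by fun_prop) fun t => (hpos t).ne').aestronglyMeasurable
      (.of_forall fun t => ?_)).congr (.of_forall fun t => ?_)
    · show ‖u t / (1 + |t|)‖ ≤ 1
      rw [norm_div, Real.norm_eq_abs, Real.norm_eq_abs, abs_of_pos (hpos t)]
      exact div_le_one_of_le₀ (hu_le t) (hpos t).le
    · show u t / (1 + |t|) * ((1 + |t|) * ψ t) = u t * ψ t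
      field_simp [(hpos t).ne']
  refine ⟨hψ₀, fun a => ?_, fun a => ?_⟩
  · simpa using (hdiv (u := fun _ => 1) continuous_const fun _ => by simp).integrableOn
  · exact (hdiv continuous_id fun t => by simp).integrableOn

theorem integrableOn_sub_mul (hψ : TailWeight ψ) (x a : ℝ) :
    IntegrableOn (fun t => (t - x) * ψ t) (Ioi a) :=
  ((hψ.integrableOn_mul a).sub ((hψ.integrableOn a).const_mul x)).congr_fun
    (fun t _ => (sub_mul t x (ψ t)).symm) measurableSet_Ioi

theorem mul_const (hψ : TailWeight ψ) {c : ℝ} (hc : 0 ≤ c) : TailWeight fun t => ψ t * c :=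
  ⟨fun t => mul_nonneg (hψ.nonneg t) hc, fun a => (hψ.integrableOn a).mul_const c,
    fun a => IntegrableOn.congr_fun ((hψ.integrableOn_mul a).mul_const c)
      (fun _ _ => mul_assoc _ _ _) measurableSet_Ioi⟩

theorem intervalIntegrable (hψ : TailWeight ψ) (a b : ℝ) : IntervalIntegrable ψ volume a b :=
  ((hψ.integrableOn (min a b - 1)).mono_set fun t ht => by
    simp only [mem_Ioi]; linarith [ht.1, min_le_left a b, min_le_right a b]).intervalIntegrable

theorem tailIntegral_nonneg (hψ : TailWeight ψ) (a : ℝ) : 0 ≤ tailIntegral ψ a :=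
  setIntegral_nonneg measurableSet_Ioi fun t _ => hψ.nonneg t

theorem tailIntegral_sub (hψ : TailWeight ψ) (a b : ℝ) :
    tailIntegral ψ a - tailIntegral ψ b = ∫ t in a..b, ψ t :=
  intervalIntegral.integral_Ioi_sub_Ioi' (hψ.integrableOn a) (hψ.integrableOn b)

theorem antitone_tailIntegral (hψ : TailWeight ψ) : Antitone (tailIntegral ψ) := fun a b hab =>
  sub_nonneg.1 <| hψ.tailIntegral_sub a b ▸
    intervalIntegral.integral_nonneg hab fun t _ => hψ.nonneg t

theorem continuous_tailIntegral (hψ : TailWeight ψ) : Continuous (tailIntegral ψ) := by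
  have h : tailIntegral ψ = fun y => tailIntegral ψ 0 - ∫ t in (0 : ℝ)..y, ψ t := by
    ext y; rw [← hψ.tailIntegral_sub, sub_sub_cancel]
  rw [h]
  exact continuous_const.sub (intervalIntegral.continuous_primitive hψ.intervalIntegrable 0)

theorem tailMoment_sub_mem_Icc (hψ : TailWeight ψ) {a b : ℝ} (hab : a ≤ b) :
    tailMoment ψ b - tailMoment ψ a ∈
      Icc ((b - a) * -tailIntegral ψ a) ((b - a) * -tailIntegral ψ b) := by
  have hsplit : tailMoment ψ a - tailMoment ψ b =
      (∫ t in a..b, (t - a) * ψ t) + (b - a) * tailIntegral ψ b := by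
    have hshift : ∫ t in Ioi b, (t - a) * ψ t = tailMoment ψ b + (b - a) * tailIntegral ψ b := by
      rw [tailMoment, tailIntegral, ← integral_const_mul,
        ← integral_add (hψ.integrableOn_sub_mul b b) ((hψ.integrableOn b).const_mul _)]
      congr 1 with t; ring
    rw [tailMoment, ← intervalIntegral.integral_Ioi_sub_Ioi (hψ.integrableOn_sub_mul a a) hab,
      hshift, tailMoment]
    ring
  have hlower : 0 ≤ ∫ t in a..b, (t - a) * ψ t :=
    intervalIntegral.integral_nonneg hab fun t ht => mul_nonneg (sub_nonneg.2 ht.1) (hψ.nonneg t)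
  have hupper : ∫ t in a..b, (t - a) * ψ t ≤ (b - a) * (tailIntegral ψ a - tailIntegral ψ b) := by
    rw [hψ.tailIntegral_sub, ← intervalIntegral.integral_const_mul]
    exact intervalIntegral.integral_mono_on hab
      ((hψ.intervalIntegrable a b).continuousOn_mul (by fun_prop))
      ((hψ.intervalIntegrable a b).const_mul _)
      fun t ht => mul_le_mul_of_nonneg_right (by linarith [ht.2]) (hψ.nonneg t)
  constructor <;> linarith

theorem hasDerivAt_tailMoment (hψ : TailWeight ψ) (x : ℝ) :
    HasDerivAt (tailMoment ψ) (-tailIntegral ψ x) x :=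
  hasDerivAt_of_sub_mem_Icc hψ.continuous_tailIntegral.neg.continuousAt
    fun _ _ hab => hψ.tailMoment_sub_mem_Icc hab

theorem continuous_tailMoment (hψ : TailWeight ψ) : Continuous (tailMoment ψ) :=
  continuous_iff_continuousAt.2 fun x => (hψ.hasDerivAt_tailMoment x).continuousAt

theorem antitone_tailMoment (hψ : TailWeight ψ) : Antitone (tailMoment ψ) := fun a b hab => by
  have h := (hψ.tailMoment_sub_mem_Icc hab).2
  nlinarith [hψ.tailIntegral_nonneg b]

theorem tailMoment_nonneg (hψ : TailWeight ψ) (a : ℝ) : 0 ≤ tailMoment ψ a :=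
  setIntegral_nonneg measurableSet_Ioi fun t ht =>
    mul_nonneg (sub_nonneg.2 (le_of_lt ht)) (hψ.nonneg t)

theorem tendsto_tailMoment_atTop (hψ : TailWeight ψ) :
    Tendsto (tailMoment ψ) atTop (𝓝 0) := by
  have hempty : ⋂ b : ℝ, Ioi b = ∅ :=
    eq_empty_of_forall_notMem fun t ht => lt_irrefl t (mem_iInter.1 ht t)
  have hmoment : Tendsto (fun b => ∫ t in Ioi b, t * ψ t) atTop (𝓝 0) := by
    simpa [hempty] using tendsto_setIntegral_of_antitone (fun _ => measurableSet_Ioi)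
      (fun _ _ hab => Ioi_subset_Ioi hab) ⟨0, hψ.integrableOn_mul 0⟩
  refine tendsto_of_tendsto_of_tendsto_of_le_of_le' tendsto_const_nhds hmoment
    (.of_forall hψ.tailMoment_nonneg) ?_
  filter_upwards [eventually_ge_atTop 0] with b hb
  exact setIntegral_mono_on (hψ.integrableOn_sub_mul b b) (hψ.integrableOn_mul b)
    measurableSet_Ioi fun t _ => mul_le_mul_of_nonneg_right (by linarith) (hψ.nonneg t)

theorem mul_comp (hψ : TailWeight ψ) {G : ℝ → ℝ} (hG : Continuous G)
    (hG_mono : MonotoneOn G (Ici 0)) (hG_nonneg : ∀ y, 0 ≤ y → 0 ≤ G y) :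
    TailWeight fun t => ψ t * G (tailMoment ψ t) := by
  have hmeas := (hG.comp hψ.continuous_tailMoment).aestronglyMeasurable (μ := volume)
  have hbdd : ∀ a, ∀ᵐ t ∂volume.restrict (Ioi a),
      ‖G (tailMoment ψ t)‖ ≤ G (tailMoment ψ a) := fun a =>
    ae_restrict_of_forall_mem measurableSet_Ioi fun t ht => by
      rw [Real.norm_eq_abs, abs_of_nonneg (hG_nonneg _ (hψ.tailMoment_nonneg t))]
      exact hG_mono (hψ.tailMoment_nonneg t) (hψ.tailMoment_nonneg a)
        (hψ.antitone_tailMoment (le_of_lt ht))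
  refine ⟨fun t => mul_nonneg (hψ.nonneg t) (hG_nonneg _ (hψ.tailMoment_nonneg t)),
    fun a => (hψ.integrableOn a).mul_bdd hmeas.restrict (hbdd a), fun a => ?_⟩
  exact IntegrableOn.congr_fun ((hψ.integrableOn_mul a).mul_bdd hmeas.restrict (hbdd a))
    (fun t _ => mul_assoc _ _ _) measurableSet_Ioi

theorem tailMoment_mul_comp_le (hψ : TailWeight ψ) {F G : ℝ → ℝ} (hG : Continuous G)
    (hG_mono : MonotoneOn G (Ici 0)) (hG_nonneg : ∀ y, 0 ≤ y → 0 ≤ G y)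
    (hF : ∀ y, HasDerivAt F (G y) y) (x : ℝ) :
    tailMoment (fun t => ψ t * G (tailMoment ψ t)) x ≤ F (tailMoment ψ x) - F 0 := by
  set J := tailMoment ψ
  have hGψ := hψ.mul_comp hG hG_mono hG_nonneg
  have hcomp : ∀ s, tailIntegral (fun t => ψ t * G (J t)) s ≤ G (J s) * tailIntegral ψ s := by
    intro s
    rw [tailIntegral, tailIntegral, ← integral_const_mul]
    refine setIntegral_mono_on (hGψ.integrableOn s) ((hψ.integrableOn s).const_mul _)
      measurableSet_Ioi fun t ht => ?_
    rw [mul_comm (G (J s))]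
    exact mul_le_mul_of_nonneg_left (hG_mono (hψ.tailMoment_nonneg t) (hψ.tailMoment_nonneg s)
      (hψ.antitone_tailMoment (le_of_lt ht))) (hψ.nonneg t)
  have hFJ : ∀ s, HasDerivAt (fun s => F (J s)) (G (J s) * -tailIntegral ψ s) s := fun s =>
    (hF (J s)).comp s (hψ.hasDerivAt_tailMoment s)
  have hbound : ∀ b, x ≤ b → tailMoment (fun t => ψ t * G (J t)) x ≤
      F (J x) - F (J b) + tailMoment (fun t => ψ t * G (J t)) b := by
    intro b hxb
    have hint₁ :
        IntervalIntegrable (fun s => -tailIntegral (fun t => ψ t * G (J t)) s) volume x b :=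
      hGψ.continuous_tailIntegral.neg.intervalIntegrable x b
    have hint₂ : IntervalIntegrable (fun s => G (J s) * -tailIntegral ψ s) volume x b :=
      ((hG.comp hψ.continuous_tailMoment).mul hψ.continuous_tailIntegral.neg).intervalIntegrable x b
    have hFTC₁ := intervalIntegral.integral_eq_sub_of_hasDerivAt
      (fun s _ => hGψ.hasDerivAt_tailMoment s) hint₁
    have hFTC₂ := intervalIntegral.integral_eq_sub_of_hasDerivAt (fun s _ => hFJ s) hint₂
    have hmono := intervalIntegral.integral_mono_on hxb hint₂ hint₁ fun s _ => by
      simpa only [mul_neg, neg_le_neg_iff] using hcomp s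
    linarith
  have hlim : Tendsto (fun b => F (J x) - F (J b) + tailMoment (fun t => ψ t * G (J t)) b)
      atTop (𝓝 (F (J x) - F 0 + 0)) :=
    (tendsto_const_nhds.sub (((hF 0).continuousAt.tendsto).comp
      hψ.tendsto_tailMoment_atTop)).add hGψ.tendsto_tailMoment_atTop
  simpa using ge_of_tendsto hlim ((eventually_ge_atTop x).mono hbound)

end TailWeight

theorem tailMoment_le_of_integrable {ψ : ℝ → ℝ} (hψ₀ : ∀ t, 0 ≤ ψ t)
    (hψ : Integrable fun t => (1 + |t|) * ψ t) (x : ℝ) :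
    tailMoment ψ x ≤ (1 + max 0 (-x)) * ∫ t, (1 + |t|) * ψ t := by
  rw [← integral_const_mul]
  refine (setIntegral_mono_on ((TailWeight.of_integrable hψ₀ hψ).integrableOn_sub_mul x x)
    (hψ.const_mul _).integrableOn measurableSet_Ioi fun t _ => ?_).trans
    (setIntegral_le_integral (hψ.const_mul _) (.of_forall fun t => by
      have := hψ₀ t; positivity))
  calc (t - x) * ψ t ≤ ((1 + max 0 (-x)) * (1 + |t|)) * ψ t := by
        refine mul_le_mul_of_nonneg_right ?_ (hψ₀ t)
        nlinarith [le_abs_self t, le_max_right 0 (-x),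
          mul_nonneg (le_max_left 0 (-x)) (abs_nonneg t)]
    _ = (1 + max 0 (-x)) * ((1 + |t|) * ψ t) := by ring

theorem norm_sub_one_le_tailMoment {V : ℝ → ℝ} {m h : ℝ → ℂ} {B : ℝ → ℝ} {x : ℝ}
    (hh : ∀ u ≥ (0 : ℝ), ‖h u‖ ≤ u)
    (hmx : m x = 1 + ∫ t in Ioi x, h (t - x) * (V t : ℂ) * m t)
    (hmB : ∀ t, x < t → ‖m t‖ ≤ B t) (hB : TailWeight fun t => |V t| * B t) :
    ‖m x - 1‖ ≤ tailMoment (fun t => |V t| * B t) x := by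
  rw [hmx, add_sub_cancel_left]
  refine (norm_integral_le_integral_norm _).trans <| integral_mono_of_nonneg
    (.of_forall fun _ => norm_nonneg _) (hB.integrableOn_sub_mul x x)
    (ae_restrict_of_forall_mem measurableSet_Ioi fun t ht => ?_)
  have hxt : 0 ≤ t - x := sub_nonneg.2 (le_of_lt ht)
  simp only [norm_mul, Complex.norm_real, Real.norm_eq_abs, mul_assoc]
  gcongr
  exacts [hh _ hxt, hmB t ht]

theorem norm_le_exp_tailMoment {V : ℝ → ℝ} {m h : ℝ → ℂ} {x₀ M : ℝ}
    (hV : TailWeight fun t => |V t|) (hh : ∀ u ≥ (0 : ℝ), ‖h u‖ ≤ u)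
    (hM : ∀ x ≥ x₀, ‖m x‖ ≤ M)
    (heq : ∀ x ≥ x₀, m x = 1 + ∫ t in Ioi x, h (t - x) * (V t : ℂ) * m t)
    {x : ℝ} (hx : x₀ ≤ x) : ‖m x‖ ≤ Real.exp (tailMoment (fun t => |V t|) x) := by
  set J := tailMoment fun t => |V t|
  have hM₀ : 0 ≤ M := (norm_nonneg _).trans (hM x₀ le_rfl)
  have hiterate : ∀ n : ℕ, ∀ x ≥ x₀,
      ‖m x‖ ≤ Real.exp (J x) + M * (J x ^ n / n.factorial) := by
    intro n
    induction n with
    | zero =>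
      intro x hx
      simpa using (hM x hx).trans (le_add_of_nonneg_left (Real.exp_pos _).le)
    | succ n ih =>
      intro x hx
      set G : ℝ → ℝ := fun y => Real.exp y + M * (y ^ n / n.factorial)
      have hG : Continuous G := by fun_prop
      have hG_mono : MonotoneOn G (Ici 0) := fun a ha b _ hab => by
        have := pow_le_pow_left₀ ha hab n
        simp only [G]
        gcongr
      have hG_nonneg : ∀ y, 0 ≤ y → 0 ≤ G y := fun y _ => by positivity
      have hF : ∀ y, HasDerivAt (fun y => Real.exp y + M * (y ^ (n + 1) / (n + 1).factorial))
          (G y) y := fun y =>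
        (Real.hasDerivAt_exp y).add ((hasDerivAt_pow_succ_div_factorial n y).const_mul M)
      have hsub := norm_sub_one_le_tailMoment hh (heq x hx) (fun t ht => ih t (hx.trans ht.le))
        (hV.mul_comp hG hG_mono hG_nonneg)
      have hkey := hV.tailMoment_mul_comp_le hG hG_mono hG_nonneg hF x
      have htri : ‖m x‖ - 1 ≤ ‖m x - 1‖ := by simpa using norm_sub_norm_le (m x) 1
      have hF₀ : Real.exp 0 + M * ((0 : ℝ) ^ (n + 1) / (n + 1).factorial) = 1 := by simp
      linarith
  have hlim : Tendsto (fun n : ℕ => Real.exp (J x) + M * (J x ^ n / n.factorial)) atTop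
      (𝓝 (Real.exp (J x) + M * 0)) :=
    tendsto_const_nhds.add ((FloorSemiring.tendsto_pow_div_factorial_atTop (J x)).const_mul M)
  simpa using ge_of_tendsto' hlim fun n => hiterate n x hx

theorem stmt_6_general (V : ℝ → ℝ) (hV : MeasureTheory.Integrable (fun t => (1 + |t|) * |V t|))
    (x₀ : ℝ) (m : ℝ → ℂ) (h : ℝ → ℂ)
    (hm_bdd : ∃ M, ∀ x ≥ x₀, ‖m x‖ ≤ M)
    (hh : ∀ u ≥ (0:ℝ), ‖h u‖ ≤ u)
    (heq : ∀ x ≥ x₀, m x = 1 + ∫ t in Set.Ioi x, h (t - x) * (V t : ℂ) * m t) :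
    (∀ x ≥ x₀, ‖m x‖ ≤ Real.exp (∫ t in Set.Ioi x, (t - x) * |V t|)) ∧
    ∃ C : ℝ, ∀ x ≥ x₀, ‖m x - 1‖ ≤ C * (1 + max 0 (-x)) := by
  have hφ : TailWeight fun t => |V t| := .of_integrable (fun t => abs_nonneg (V t)) hV
  obtain ⟨M, hM⟩ := hm_bdd
  have hexp : ∀ x ≥ x₀, ‖m x‖ ≤ Real.exp (tailMoment (fun t => |V t|) x) :=
    fun x hx => norm_le_exp_tailMoment hφ hh hM heq hx
  set c := Real.exp (tailMoment (fun t => |V t|) x₀)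
  refine ⟨hexp, c * ∫ t, (1 + |t|) * |V t|, fun x hx => ?_⟩
  have hmc : ∀ t, x < t → ‖m t‖ ≤ c := fun t ht =>
    (hexp t (hx.trans ht.le)).trans
      (Real.exp_le_exp.2 (hφ.antitone_tailMoment (hx.trans ht.le)))
  have hsub := norm_sub_one_le_tailMoment hh (heq x hx) hmc (hφ.mul_const (Real.exp_pos _).le)
  rw [tailMoment_mul_const] at hsub
  calc ‖m x - 1‖ ≤ tailMoment (fun t => |V t|) x * c := hsub
    _ ≤ (1 + max 0 (-x)) * (∫ t, (1 + |t|) * |V t|) * c := by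
      gcongr
      exact tailMoment_le_of_integrable (fun t => abs_nonneg (V t)) hV x
    _ = c * (∫ t, (1 + |t|) * |V t|) * (1 + max 0 (-x)) := by ring

/-- Gronwall-type bound for the modified Jost function. -/
theorem stmt_6 (V : ℝ → ℝ) (hV : MeasureTheory.Integrable (fun t => (1 + |t|) * |V t|))
    (x₀ : ℝ) (m : ℝ → ℂ) (h : ℝ → ℂ)
    (hm_cont : ContinuousOn m (Set.Ici x₀)) (hm_bdd : ∃ M, ∀ x ≥ x₀, ‖m x‖ ≤ M)
    (hh : ∀ u ≥ (0:ℝ), ‖h u‖ ≤ u)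
    (heq : ∀ x ≥ x₀, m x = 1 + ∫ t in Set.Ioi x, h (t - x) * (V t : ℂ) * m t) :
    (∀ x ≥ x₀, ‖m x‖ ≤ Real.exp (∫ t in Set.Ioi x, (t - x) * |V t|)) ∧
    ∃ C : ℝ, ∀ x ≥ x₀, ‖m x - 1‖ ≤ C * (1 + max 0 (-x)) :=
  stmt_6_general V hV x₀ m h hm_bdd hh heq
end

section
/- Let 0 < r < ∞, s = n/r, and let g : ℝⁿ → ℂ be continuous and bounded. If there exists a constant A such that |∇g(t)| ≤ A·2^{1/2}·(1 + |x − t|)^s · sup_{u} |g(u)|/(1+|x−u|)^s for all t (a Bernstein-type bound), then the Peetre maximal function satisfies sup_t |g(t)|/(1 + |x − t|)^s ≤ C_{n,r} [M(|g|^r)(x)]^{1/r}, where M denotes the Hardy–Littlewood maximal function. -/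
/-!
Let `S` be the Peetre supremum at `x` and pick `t` with `‖g t‖ > (3/4) S (1 + ‖x - t‖)^s`.
On the unit ball around `t` the weight `(1 + ‖x - ·‖)^s` changes by at most a factor `2^s`, so
the Bernstein bound gives `‖∇g‖ ≤ 2^s K S (1 + ‖x - t‖)^s` there (`K = A √2`), and by the mean
value theorem `‖g‖ ≥ (S/2) (1 + ‖x - t‖)^s` on a ball `B(t, δ)` whose radius depends only on `s`
and `K`. This ball lies in `B(x, ‖x - t‖ + δ)`, whose volume is larger by the factor
`((‖x - t‖ + δ)/δ)^n ≤ δ^{-n} (1 + ‖x - t‖)^n`. Since `r s = n`, this factor is absorbed by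
`((1 + ‖x - t‖)^s)^r`, so the average of `‖g‖^r` over `B(x, ‖x - t‖ + δ)` is at least
`δ^n (S/2)^r`.
-/

open MeasureTheory Metric Module
open scoped ENNReal NNReal

noncomputable section

section Peetre

variable {E F : Type*} [SeminormedAddCommGroup E] [SeminormedAddCommGroup F]

def peetreMaximal (g : E → F) (s : ℝ) (x : E) : ℝ :=
  ⨆ t, ‖g t‖ / (1 + ‖x - t‖) ^ s

theorem peetreMaximal_nonneg (g : E → F) (s : ℝ) (x : E) : 0 ≤ peetreMaximal g s x :=
  Real.iSup_nonneg fun _ => by positivity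

theorem one_add_norm_sub_rpow_le {s : ℝ} (hs : 0 ≤ s) {x t z : E} (hz : ‖t - z‖ ≤ 1) :
    (1 + ‖x - z‖) ^ s ≤ 2 ^ s * (1 + ‖x - t‖) ^ s := by
  rw [← Real.mul_rpow zero_le_two (by positivity)]
  refine Real.rpow_le_rpow (by positivity) ?_ hs
  linarith [norm_sub_le_norm_sub_add_norm_sub x t z, norm_nonneg (x - t)]

end Peetre

section Bernstein

variable {E F : Type*} [NormedAddCommGroup E] [NormedSpace ℝ E]
  [NormedAddCommGroup F] [NormedSpace ℝ F]

theorem norm_sub_mul_le_norm_of_norm_fderiv_le {g : E → F} {t y : E} {δ L : ℝ}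
    (hg : ∀ z ∈ ball t δ, DifferentiableAt ℝ g z) (hL : ∀ z ∈ ball t δ, ‖fderiv ℝ g z‖ ≤ L)
    (hy : y ∈ ball t δ) : ‖g t‖ - L * δ ≤ ‖g y‖ := by
  have hδ : 0 < δ := pos_of_mem_ball hy
  have hL0 : 0 ≤ L := (norm_nonneg _).trans (hL t (mem_ball_self hδ))
  have hyt : ‖y - t‖ ≤ δ := (mem_ball_iff_norm.1 hy).le
  have hmvt := (convex_ball t δ).norm_image_sub_le_of_norm_fderiv_le hg hL (mem_ball_self hδ) hy
  have hgyt := norm_sub_norm_le (g t) (g y)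
  rw [norm_sub_rev] at hgyt
  nlinarith

/-- Across a ball of this radius, a gradient bounded by `2^s K S (1 + ‖x - t‖)^s` moves `g` by at
most `S (1 + ‖x - t‖)^s / 4`. -/
def bernsteinRadius (s K : ℝ) : ℝ := (4 * (2 ^ s * K + 1))⁻¹

theorem bernsteinRadius_pos (s : ℝ) {K : ℝ} (hK : 0 ≤ K) : 0 < bernsteinRadius s K := by
  unfold bernsteinRadius; positivity

theorem bernsteinRadius_le_one (s : ℝ) {K : ℝ} (hK : 0 ≤ K) : bernsteinRadius s K ≤ 1 := by
  unfold bernsteinRadius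
  have : 0 ≤ 2 ^ s * K := by positivity
  exact inv_le_one_of_one_le₀ (by linarith)

theorem two_rpow_mul_mul_bernsteinRadius_le (s : ℝ) {K : ℝ} (hK : 0 ≤ K) :
    2 ^ s * K * bernsteinRadius s K ≤ 1 / 4 := by
  unfold bernsteinRadius
  have : 0 ≤ 2 ^ s * K := by positivity
  rw [← div_eq_mul_inv, div_le_div_iff₀ (by positivity) (by norm_num)]
  linarith

theorem exists_forall_mem_ball_peetreMaximal_div_two_mul_le_norm {g : E → F}
    (hg : Differentiable ℝ g) {s K : ℝ} (hs : 0 ≤ s) (hK : 0 ≤ K) (x : E)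
    (hgrad : ∀ t, ‖fderiv ℝ g t‖ ≤ K * (1 + ‖x - t‖) ^ s * peetreMaximal g s x) :
    ∃ t, ∀ y ∈ ball t (bernsteinRadius s K),
      peetreMaximal g s x / 2 * (1 + ‖x - t‖) ^ s ≤ ‖g y‖ := by
  set S := peetreMaximal g s x
  rcases (peetreMaximal_nonneg g s x).eq_or_lt with hS | hS
  · exact ⟨x, fun y _ => by simp [S, ← hS]⟩
  obtain ⟨t, ht⟩ : ∃ t, 3 / 4 * S < ‖g t‖ / (1 + ‖x - t‖) ^ s :=
    exists_lt_of_lt_ciSup (show 3 / 4 * S < S by linarith)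
  set W := (1 + ‖x - t‖) ^ s
  have hgt : 3 / 4 * S * W ≤ ‖g t‖ := ((lt_div_iff₀ (by positivity)).1 ht).le
  have hgrad_ball : ∀ z ∈ ball t (bernsteinRadius s K),
      ‖fderiv ℝ g z‖ ≤ 2 ^ s * K * W * S := fun z hz => by
    have hzt : ‖t - z‖ ≤ 1 := by
      rw [← dist_eq_norm, dist_comm]
      exact (mem_ball.1 hz).le.trans (bernsteinRadius_le_one s hK)
    calc ‖fderiv ℝ g z‖ ≤ K * (1 + ‖x - z‖) ^ s * S := hgrad z
      _ ≤ K * (2 ^ s * W) * S := by gcongr; exact one_add_norm_sub_rpow_le hs hzt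
      _ = 2 ^ s * K * W * S := by ring
  refine ⟨t, fun y hy => ?_⟩
  have hmvt := norm_sub_mul_le_norm_of_norm_fderiv_le (fun z _ => hg z) hgrad_ball hy
  have hquarter := mul_le_mul_of_nonneg_right (two_rpow_mul_mul_bernsteinRadius_le s hK)
    (by positivity : 0 ≤ W * S)
  nlinarith

end Bernstein

section Maximal

def centeredMaximal {E : Type*} [PseudoMetricSpace E] [MeasurableSpace E] (μ : Measure E)
    (f : E → ℝ≥0∞) (x : E) : ℝ≥0∞ :=
  ⨆ (R : ℝ) (_ : 0 < R), (μ (ball x R))⁻¹ * ∫⁻ y in ball x R, f y ∂μ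

variable {E F : Type*} [NormedAddCommGroup E] [NormedSpace ℝ E] [FiniteDimensional ℝ E]
  [MeasurableSpace E] [BorelSpace E] (μ : Measure E) [μ.IsAddHaarMeasure]
  [NormedAddCommGroup F]

theorem addHaar_ball_eq_ofReal_div_pow_mul (x t : E) {δ R : ℝ} (hδ : 0 < δ) (hR : 0 < R) :
    μ (ball t δ) = ENNReal.ofReal ((δ / R) ^ finrank ℝ E) * μ (ball x R) := by
  rw [Measure.addHaar_ball_center μ x, ← Measure.addHaar_ball_mul_of_pos μ t (div_pos hδ hR),
    div_mul_cancel₀ _ hR.ne']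

theorem ofReal_div_pow_mul_le_average_ball {f : E → ℝ≥0∞} {a : ℝ≥0∞} {x t : E} {δ R : ℝ}
    (hδ : 0 < δ) (hsub : ball t δ ⊆ ball x R) (hf : ∀ y ∈ ball t δ, a ≤ f y) :
    ENNReal.ofReal ((δ / R) ^ finrank ℝ E) * a ≤ (μ (ball x R))⁻¹ * ∫⁻ y in ball x R, f y ∂μ := by
  have hR : 0 < R := pos_of_mem_ball (hsub (mem_ball_self hδ))
  rw [← ENNReal.div_eq_inv_mul, ENNReal.le_div_iff_mul_le (.inl (measure_ball_pos μ x hR).ne')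
    (.inl measure_ball_lt_top.ne)]
  calc ENNReal.ofReal ((δ / R) ^ finrank ℝ E) * a * μ (ball x R) = a * μ (ball t δ) := by
        rw [addHaar_ball_eq_ofReal_div_pow_mul μ x t hδ hR]; ring
    _ = ∫⁻ _ in ball t δ, a ∂μ := (setLIntegral_const _ _).symm
    _ ≤ ∫⁻ y in ball t δ, f y ∂μ := setLIntegral_mono' measurableSet_ball hf
    _ ≤ ∫⁻ y in ball x R, f y ∂μ := lintegral_mono_set hsub

theorem ofReal_rpow_mul_le_centeredMaximal_rpow {g : E → F} {r s : ℝ} (hr : 0 < r)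
    (hs : s = finrank ℝ E / r) {x t : E} {δ c : ℝ} (hδ : 0 < δ) (hδ1 : δ ≤ 1) (hc : 0 ≤ c)
    (hlow : ∀ y ∈ ball t δ, c * (1 + ‖x - t‖) ^ s ≤ ‖g y‖) :
    ENNReal.ofReal (δ ^ s * c) ≤
      centeredMaximal μ (fun y => (‖g y‖₊ : ℝ≥0∞) ^ r) x ^ (1 / r) := by
  set d := finrank ℝ E
  set ρ := ‖x - t‖
  have hR : 0 < ρ + δ := by positivity
  have hsub : ball t δ ⊆ ball x (ρ + δ) :=
    ball_subset_ball' (by rw [dist_comm, dist_eq_norm]; linarith)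
  have hweight : (c * (1 + ρ) ^ s) ^ r = c ^ r * (1 + ρ) ^ d := by
    rw [Real.mul_rpow hc (by positivity), ← Real.rpow_mul (by positivity), hs,
      div_mul_cancel₀ _ hr.ne', Real.rpow_natCast]
  have hvolume : δ ^ d * c ^ r ≤ (δ / (ρ + δ)) ^ d * (c * (1 + ρ) ^ s) ^ r := by
    rw [hweight, div_pow, div_mul_eq_mul_div, le_div_iff₀ (by positivity)]
    have : (ρ + δ) ^ d ≤ (1 + ρ) ^ d := pow_le_pow_left₀ hR.le (by linarith) d
    calc δ ^ d * c ^ r * (ρ + δ) ^ d ≤ δ ^ d * c ^ r * (1 + ρ) ^ d := by gcongr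
      _ = δ ^ d * (c ^ r * (1 + ρ) ^ d) := by ring
  have hlow_r : ∀ y ∈ ball t δ,
      ENNReal.ofReal ((c * (1 + ρ) ^ s) ^ r) ≤ (‖g y‖₊ : ℝ≥0∞) ^ r := fun y hy => by
    rw [← ENNReal.ofReal_rpow_of_nonneg (by positivity) hr.le, ← enorm_eq_nnnorm, ← ofReal_norm]
    exact ENNReal.rpow_le_rpow (ENNReal.ofReal_le_ofReal (hlow y hy)) hr.le
  have havg : ENNReal.ofReal (δ ^ d * c ^ r) ≤
      centeredMaximal μ (fun y => (‖g y‖₊ : ℝ≥0∞) ^ r) x :=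
    calc ENNReal.ofReal (δ ^ d * c ^ r)
        ≤ ENNReal.ofReal ((δ / (ρ + δ)) ^ d) * ENNReal.ofReal ((c * (1 + ρ) ^ s) ^ r) := by
          rw [← ENNReal.ofReal_mul (by positivity)]
          exact ENNReal.ofReal_le_ofReal hvolume
      _ ≤ (μ (ball x (ρ + δ)))⁻¹ * ∫⁻ y in ball x (ρ + δ), (‖g y‖₊ : ℝ≥0∞) ^ r ∂μ :=
          ofReal_div_pow_mul_le_average_ball μ hδ hsub hlow_r
      _ ≤ centeredMaximal μ (fun y => (‖g y‖₊ : ℝ≥0∞) ^ r) x :=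
          le_iSup₂ (f := fun (R : ℝ) (_ : 0 < R) =>
            (μ (ball x R))⁻¹ * ∫⁻ y in ball x R, (‖g y‖₊ : ℝ≥0∞) ^ r ∂μ) (ρ + δ) hR
  have hroot : (δ ^ d * c ^ r) ^ (1 / r) = δ ^ s * c := by
    rw [Real.mul_rpow (by positivity) (by positivity), ← Real.rpow_natCast,
      ← Real.rpow_mul hδ.le, ← Real.rpow_mul hc, mul_one_div, mul_one_div, div_self hr.ne',
      Real.rpow_one, hs]
  rw [← hroot, ← ENNReal.ofReal_rpow_of_nonneg (by positivity) (by positivity)]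
  exact ENNReal.rpow_le_rpow havg (by positivity)

theorem ofReal_peetreMaximal_le [NormedSpace ℝ F] {g : E → F} (hg : Differentiable ℝ g)
    {r s K : ℝ} (hr : 0 < r) (hs : s = finrank ℝ E / r) (hK : 0 ≤ K) (x : E)
    (hgrad : ∀ t, ‖fderiv ℝ g t‖ ≤ K * (1 + ‖x - t‖) ^ s * peetreMaximal g s x) :
    ENNReal.ofReal (peetreMaximal g s x) ≤ ENNReal.ofReal (2 * bernsteinRadius s K ^ (-s)) *
      centeredMaximal μ (fun y => (‖g y‖₊ : ℝ≥0∞) ^ r) x ^ (1 / r) := by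
  have hs0 : 0 ≤ s := hs ▸ by positivity
  set S := peetreMaximal g s x
  set δ := bernsteinRadius s K
  have hδ : 0 < δ := bernsteinRadius_pos s hK
  obtain ⟨t, ht⟩ := exists_forall_mem_ball_peetreMaximal_div_two_mul_le_norm hg hs0 hK x hgrad
  have hball := ofReal_rpow_mul_le_centeredMaximal_rpow μ hr hs hδ (bernsteinRadius_le_one s hK)
    (by positivity [peetreMaximal_nonneg g s x]) ht
  calc ENNReal.ofReal S = ENNReal.ofReal (2 * δ ^ (-s)) * ENNReal.ofReal (δ ^ s * (S / 2)) := by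
        rw [← ENNReal.ofReal_mul (by positivity), Real.rpow_neg hδ.le]
        field_simp
    _ ≤ _ := by gcongr

end Maximal

end

/-- Peetre maximal function controlled by the Hardy–Littlewood maximal
function of |g|^r, with s = n/r. -/
theorem stmt_10 (n : ℕ) (r : ℝ) (hr : 0 < r) (A : ℝ) :
    ∃ C : ℝ≥0∞, 0 < C ∧ C ≠ ⊤ ∧
      ∀ (g : EuclideanSpace ℝ (Fin n) → ℂ), Continuous g → (∃ M, ∀ t, ‖g t‖ ≤ M) →
      Differentiable ℝ g →
      ∀ x : EuclideanSpace ℝ (Fin n),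
      (∀ t, ‖fderiv ℝ g t‖ ≤ A * (2:ℝ) ^ ((1:ℝ)/2) * (1 + ‖x - t‖) ^ ((n:ℝ)/r) *
          (⨆ u, ‖g u‖ / (1 + ‖x - u‖) ^ ((n:ℝ)/r))) →
      ENNReal.ofReal (⨆ t, ‖g t‖ / (1 + ‖x - t‖) ^ ((n:ℝ)/r)) ≤
        C * (⨆ (R : ℝ) (_ : 0 < R),
          (volume (Metric.ball x R))⁻¹ *
            ∫⁻ y in Metric.ball x R, (‖g y‖₊ : ℝ≥0∞) ^ r) ^ (1/r) := by
  set K := max A 0 * (2:ℝ) ^ ((1:ℝ)/2)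
  have hK : 0 ≤ K := by positivity
  have hδ := bernsteinRadius_pos ((n:ℝ)/r) hK
  refine ⟨ENNReal.ofReal (2 * bernsteinRadius ((n:ℝ)/r) K ^ (-((n:ℝ)/r))),
    ENNReal.ofReal_pos.2 (by positivity), ENNReal.ofReal_ne_top, ?_⟩
  intro g _ _ hg x hgrad
  refine ofReal_peetreMaximal_le volume hg hr (by simp) hK x fun t => (hgrad t).trans ?_
  have hS := peetreMaximal_nonneg g ((n:ℝ)/r) x
  gcongr ?_ * _ * _
  exact mul_le_mul_of_nonneg_right (le_max_left A 0) (by positivity)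
end

section
/- Let α ≥ 1/2. The one-dimensional Laguerre heat kernel e^{−tL_α}(x,y) = (−i)^α (sinh 2t)^{−1} e^{−((x²+y²)/2) coth 2t} (xy)^{1/2} J_α(i x y / sinh 2t) satisfies, for t ≥ 1 and x, y > 0, the bound |e^{−tL_α}(x,y)| ≤ c' e^{−t} e^{−c|x−y|²/t} for some constants c' > 0 and 0 < c < 1, using the asymptotics J_α(z) = O(z^α) as z → 0 and J_α(iz)·e^{−z} = O(z^{−1/2}) as z → +∞ along the imaginary axis. -/
set_option maxHeartbeats 1000000 in
/-- long-time Gaussian-type bound for the 1D Laguerre heat kernel,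
assuming the standard Bessel asymptotics. -/
theorem stmt_11 (α : ℝ) (hα : 1/2 ≤ α) (J : ℂ → ℂ) (A : ℝ) (hA : 0 < A)
    (hJ0 : ∀ s : ℝ, 0 < s → s ≤ 1 → ‖J (Complex.I * (s:ℂ))‖ ≤ A * s ^ α)
    (hJinf : ∀ s : ℝ, 1 ≤ s → ‖J (Complex.I * (s:ℂ))‖ ≤ A * Real.exp s * s ^ (-(1:ℝ)/2)) :
    ∃ c' > (0:ℝ), ∃ c : ℝ, 0 < c ∧ c < 1 ∧
      ∀ t ≥ (1:ℝ), ∀ x > (0:ℝ), ∀ y > (0:ℝ),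
        (Real.sinh (2*t))⁻¹ *
          Real.exp (-((x^2 + y^2)/2) * (Real.cosh (2*t) / Real.sinh (2*t))) *
          Real.sqrt (x*y) * ‖J (Complex.I * ((x*y/Real.sinh (2*t) : ℝ) : ℂ))‖
          ≤ c' * Real.exp (-t) * Real.exp (-c * |x - y|^2 / t) := by
  refine ⟨4*A, by positivity, 1/4, by norm_num, by norm_num, ?_⟩
  intro t ht x hx y hy
  set sh := Real.sinh (2*t) with hshdef
  set ch := Real.cosh (2*t) with hchdef
  have hexp4 : 4 ≤ Real.exp (2*t) := by
    rw [two_mul, Real.exp_add]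
    nlinarith [Real.add_one_le_exp t]
  have hsh_lb : Real.exp (2*t) / 4 ≤ sh := by
    rw [hshdef, Real.sinh_eq]
    have h1 : Real.exp (-(2*t)) ≤ 1 := by
      rw [show (1:ℝ) = Real.exp 0 by rw [Real.exp_zero]]
      exact Real.exp_le_exp.2 (by linarith)
    linarith
  have hsh1 : 1 ≤ sh := by linarith
  have hshpos : 0 < sh := by linarith
  have hch : sh ≤ ch := by
    rw [hshdef, hchdef, Real.sinh_eq, Real.cosh_eq]
    have := Real.exp_pos (-(2*t)); linarith
  have hch1 : 1 ≤ ch := le_trans hsh1 hch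
  have hs_pos : 0 < x*y/sh := by positivity
  have hsqrtpos : 0 < Real.sqrt sh := Real.sqrt_pos.2 hshpos
  have hxypos : 0 < Real.sqrt (x*y) := Real.sqrt_pos.2 (by positivity)
  have hss : Real.sqrt sh * Real.sqrt sh = sh := Real.mul_self_sqrt hshpos.le
  have hshinv : sh⁻¹ ≤ 4 * Real.exp (-t) := by
    have h0 : 0 < Real.exp (2*t)/4 := by positivity
    have h2 : Real.exp t ≤ Real.exp (2*t) := Real.exp_le_exp.2 (by linarith)
    calc sh⁻¹ ≤ (Real.exp (2*t)/4)⁻¹ := inv_anti₀ h0 hsh_lb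
      _ = 4 * (Real.exp (2*t))⁻¹ := by rw [inv_div]; ring
      _ ≤ 4 * (Real.exp t)⁻¹ := by gcongr
      _ = 4 * Real.exp (-t) := by rw [Real.exp_neg]
  have hsqinv1 : (Real.sqrt sh)⁻¹ ≤ 1 := by
    rw [inv_le_one_iff₀]
    right
    calc (1:ℝ) = Real.sqrt 1 := (Real.sqrt_one).symm
      _ ≤ Real.sqrt sh := Real.sqrt_le_sqrt hsh1
  have hsqinv2 : (Real.sqrt sh)⁻¹ ≤ 2 * Real.exp (-t) := by
    have h1 : Real.exp t / 2 ≤ Real.sqrt sh := by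
      have h2 : Real.sqrt (Real.exp (2*t)/4) ≤ Real.sqrt sh := Real.sqrt_le_sqrt hsh_lb
      calc Real.exp t / 2 = Real.sqrt (Real.exp (2*t)/4) := by
            rw [show Real.exp (2*t)/4 = (Real.exp t/2)^2 by
              rw [two_mul, Real.exp_add]; ring]
            rw [Real.sqrt_sq (by positivity)]
        _ ≤ _ := h2
    calc (Real.sqrt sh)⁻¹ ≤ (Real.exp t/2)⁻¹ := inv_anti₀ (by positivity) h1
      _ = 2 * Real.exp (-t) := by rw [Real.exp_neg, inv_div]; ring
  have main : sh⁻¹ * Real.exp (-((x^2 + y^2)/2) * (ch / sh)) *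
      Real.sqrt (x*y) * ‖J (Complex.I * ((x*y/sh : ℝ) : ℂ))‖
      ≤ 4*A * Real.exp (-t) * Real.exp (-((x-y)^2/4)) := by
    rcases le_or_gt (x*y/sh) 1 with hcase | hcase
    · -- small argument
      have hJ : ‖J (Complex.I * ((x*y/sh : ℝ) : ℂ))‖ ≤ A * Real.sqrt (x*y/sh) := by
        refine le_trans (hJ0 _ hs_pos hcase) ?_
        gcongr
        rw [Real.sqrt_eq_rpow]
        exact Real.rpow_le_rpow_of_exponent_ge hs_pos hcase hα
      have hsq : Real.sqrt (x*y) * Real.sqrt (x*y/sh) = x*y / Real.sqrt sh := by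
        rw [Real.sqrt_div (by positivity), ← mul_div_assoc,
          Real.mul_self_sqrt (by positivity)]
      have hE : Real.exp (-((x^2+y^2)/2) * (ch/sh)) ≤
          Real.exp (-((x+y)^2/4)) * Real.exp (-((x-y)^2/4)) := by
        rw [← Real.exp_add]
        apply Real.exp_le_exp.2
        have h1 : 1 ≤ ch/sh := (one_le_div hshpos).2 hch
        have ha : (0:ℝ) ≤ (x^2+y^2)/2 := by positivity
        nlinarith [mul_le_mul_of_nonneg_left h1 ha]
      have hxy_exp : (x*y) * Real.exp (-((x+y)^2/4)) ≤ 1 := by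
        have h1 : x*y ≤ (x+y)^2/4 := by nlinarith [sq_nonneg (x-y)]
        have h2 : (x+y)^2/4 ≤ Real.exp ((x+y)^2/4) := by
          nlinarith [Real.add_one_le_exp ((x+y)^2/4)]
        rw [Real.exp_neg]
        calc (x*y) * (Real.exp ((x+y)^2/4))⁻¹
            ≤ Real.exp ((x+y)^2/4) * (Real.exp ((x+y)^2/4))⁻¹ := by
              gcongr
              linarith
          _ = 1 := mul_inv_cancel₀ (Real.exp_pos _).ne'
      calc sh⁻¹ * Real.exp (-((x^2 + y^2)/2) * (ch / sh)) *
            Real.sqrt (x*y) * ‖J (Complex.I * ((x*y/sh : ℝ) : ℂ))‖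
          ≤ sh⁻¹ * Real.exp (-((x^2 + y^2)/2) * (ch / sh)) *
            Real.sqrt (x*y) * (A * Real.sqrt (x*y/sh)) := by
            gcongr
        _ = A * sh⁻¹ * (Real.sqrt (x*y) * Real.sqrt (x*y/sh)) *
            Real.exp (-((x^2 + y^2)/2) * (ch / sh)) := by ring
        _ = A * sh⁻¹ * (x*y / Real.sqrt sh) *
            Real.exp (-((x^2 + y^2)/2) * (ch / sh)) := by rw [hsq]
        _ ≤ A * sh⁻¹ * (x*y / Real.sqrt sh) *
            (Real.exp (-((x+y)^2/4)) * Real.exp (-((x-y)^2/4))) := by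
            gcongr
        _ = A * sh⁻¹ * (Real.sqrt sh)⁻¹ * ((x*y) * Real.exp (-((x+y)^2/4))) *
            Real.exp (-((x-y)^2/4)) := by ring
        _ ≤ A * (4 * Real.exp (-t)) * 1 * 1 * Real.exp (-((x-y)^2/4)) := by
            gcongr
        _ = 4*A * Real.exp (-t) * Real.exp (-((x-y)^2/4)) := by ring
    · -- large argument
      have hJ : ‖J (Complex.I * ((x*y/sh : ℝ) : ℂ))‖ ≤
          A * Real.exp (x*y/sh) * (Real.sqrt sh / Real.sqrt (x*y)) := by
        have hpow : (x*y/sh) ^ (-(1:ℝ)/2) = Real.sqrt sh / Real.sqrt (x*y) := by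
          rw [show (-(1:ℝ)/2) = -(1/2 : ℝ) by norm_num, Real.rpow_neg hs_pos.le,
            ← Real.sqrt_eq_rpow, Real.sqrt_div (by positivity : (0:ℝ) ≤ x*y), inv_div]
        rw [← hpow]
        exact hJinf _ hcase.le
      have hEexp : Real.exp (-((x^2+y^2)/2)*(ch/sh)) * Real.exp (x*y/sh) ≤
          Real.exp (-((x-y)^2/4)) := by
        rw [← Real.exp_add]
        apply Real.exp_le_exp.2
        have key : 2*(x*y) - (x^2+y^2)*ch ≤ -(sh*(x-y)^2) := by
          nlinarith [mul_nonneg (sq_nonneg (x-y)) (sub_nonneg.2 hch),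
            mul_nonneg (le_of_lt (mul_pos hx hy)) (sub_nonneg.2 hch1)]
        have heq : -((x^2+y^2)/2)*(ch/sh) + x*y/sh =
            (2*(x*y) - (x^2+y^2)*ch)/(2*sh) := by
          field_simp
          ring
        rw [heq, div_le_iff₀ (by positivity)]
        nlinarith [mul_nonneg hshpos.le (sq_nonneg (x-y))]
      have hinvsq : sh⁻¹ * Real.sqrt sh = (Real.sqrt sh)⁻¹ := by
        rw [show sh⁻¹ = (Real.sqrt sh * Real.sqrt sh)⁻¹ from by rw [hss],
          mul_inv, mul_assoc, inv_mul_cancel₀ hsqrtpos.ne', mul_one]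
      calc sh⁻¹ * Real.exp (-((x^2 + y^2)/2) * (ch / sh)) *
            Real.sqrt (x*y) * ‖J (Complex.I * ((x*y/sh : ℝ) : ℂ))‖
          ≤ sh⁻¹ * Real.exp (-((x^2 + y^2)/2) * (ch / sh)) *
            Real.sqrt (x*y) * (A * Real.exp (x*y/sh) * (Real.sqrt sh / Real.sqrt (x*y))) := by
            gcongr
        _ = A * (sh⁻¹ * Real.sqrt sh) * (Real.sqrt (x*y) / Real.sqrt (x*y)) *
            (Real.exp (-((x^2 + y^2)/2) * (ch / sh)) * Real.exp (x*y/sh)) := by ring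
        _ = A * (Real.sqrt sh)⁻¹ *
            (Real.exp (-((x^2 + y^2)/2) * (ch / sh)) * Real.exp (x*y/sh)) := by
            rw [hinvsq, div_self hxypos.ne', mul_one]
        _ ≤ A * (2 * Real.exp (-t)) * Real.exp (-((x-y)^2/4)) := by
            gcongr
        _ ≤ 4*A * Real.exp (-t) * Real.exp (-((x-y)^2/4)) := by
            nlinarith [mul_pos (mul_pos hA (Real.exp_pos (-t))) (Real.exp_pos (-((x-y)^2/4)))]
  calc sh⁻¹ * Real.exp (-((x^2 + y^2)/2) * (ch / sh)) *
        Real.sqrt (x*y) * ‖J (Complex.I * ((x*y/sh : ℝ) : ℂ))‖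
      ≤ 4*A * Real.exp (-t) * Real.exp (-((x-y)^2/4)) := main
    _ ≤ 4*A * Real.exp (-t) * Real.exp (-(1/4) * |x - y|^2 / t) := by
        gcongr
        rw [sq_abs]
        have h1 : (1/4)*(x-y)^2/t ≤ (1/4)*(x-y)^2 :=
          div_le_self (by positivity) ht
        have h2 : -(1/4) * (x-y)^2 / t = -(1/4*(x-y)^2/t) := by ring
        rw [h2]
        linarith
end
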